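/- Let G be a 1-tough graph on at least three vertices with no 2-factor, and let (A,B) be a biased barrier of G. Then there exists a component H of G − (A ∪ B) with e(H,B) odd and e(H,B) ≥ 3; that is, ⋃_{t≥1} 𝒞_{2t+1} ≠ ∅. -/

import Mathlib

open SimpleGraph

variable {V : Type*}

/-- The number of (ordered) pairs giving edges between `X` and `Y`;
for disjoint `X`, `Y` this is the number of edges between `X` and `Y`. -/
noncomputable def eB (G : SimpleGraph V) (X Y : Set V) : ℕ :=
  Set.ncard {p : V × V | p.1 ∈ X ∧ p.2 ∈ Y ∧ G.Adj p.1 p.2}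

/-- The vertex set (in `V`) of a connected component of the induced subgraph on `U`. -/
def compSupp (G : SimpleGraph V) (U : Set V)
    (C : (G.induce U).ConnectedComponent) : Set V :=
  Subtype.val '' C.supp

/-- `δ(A,B) = 2|A| - 2|B| + ∑_{v ∈ B} d_{G-A}(v) - o(A,B)`, where `o(A,B)` is the
number of components of `G - (A ∪ B)` sending an odd number of edges to `B`. -/
noncomputable def deltaAB (G : SimpleGraph V) (A B : Set V) : ℤ :=
  2 * A.ncard - 2 * B.ncard + eB G B Aᶜ -
    Nat.card {C : (G.induce (A ∪ B)ᶜ).ConnectedComponent //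
      Odd (eB G (compSupp G (A ∪ B)ᶜ C) B)}

/-- A barrier (Tutte pair) of `G`. -/
def IsBarrier (G : SimpleGraph V) (A B : Set V) : Prop :=
  Disjoint A B ∧ deltaAB G A B ≤ -2

/-- A biased barrier: a barrier maximizing `|A|` and, subject to that, minimizing `|B|`. -/
def IsBiasedBarrier (G : SimpleGraph V) (A B : Set V) : Prop :=
  IsBarrier G A B ∧
    ∀ A' B' : Set V, IsBarrier G A' B' →
      A'.ncard ≤ A.ncard ∧ (A'.ncard = A.ncard → B.ncard ≤ B'.ncard)

/-- A `2`-factor is a `2`-regular spanning subgraph. -/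
def HasTwoFactor (G : SimpleGraph V) : Prop :=
  ∃ H : SimpleGraph V, H ≤ G ∧ ∀ v : V, (H.neighborSet v).ncard = 2

/-- The number of components of `G - S`. -/
noncomputable def numComp (G : SimpleGraph V) (S : Set V) : ℕ :=
  Nat.card ((G.induce Sᶜ).ConnectedComponent)

/-- `G` is `t`-tough: every vertex cut `S` satisfies `|S| ≥ t · c(G - S)`. -/
def Tough (t : ℝ) (G : SimpleGraph V) : Prop :=
  ∀ S : Set V, 2 ≤ numComp G S → t * (numComp G S : ℝ) ≤ (S.ncard : ℝ)

/-- The toughness `τ(G) = min_S |S| / c(G - S)` over vertex cuts `S`. -/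
noncomputable def toughness (G : SimpleGraph V) : ℝ :=
  sInf {r : ℝ | ∃ S : Set V, 2 ≤ numComp G S ∧ r = (S.ncard : ℝ) / (numComp G S : ℝ)}

/-- `G` is `k`-connected. -/
def KConnected (k : ℕ) (G : SimpleGraph V) : Prop :=
  k < Nat.card V ∧ ∀ S : Set V, S.ncard < k → (G.induce Sᶜ).Connected

/-- The independence number `α(G)`. -/
noncomputable def indepNum (G : SimpleGraph V) : ℕ :=
  sSup {n : ℕ | ∃ s : Set V, (∀ u ∈ s, ∀ v ∈ s, ¬ G.Adj u v) ∧ s.ncard = n}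

/-- The minimum degree `δ(G)`. -/
noncomputable def minDeg (G : SimpleGraph V) : ℕ :=
  sInf {d : ℕ | ∃ v : V, (G.neighborSet v).ncard = d}

/-- `H` occurs as an induced subgraph of `G`. -/
def IsInducedCopy {W : Type*} (H : SimpleGraph W) (G : SimpleGraph V) : Prop :=
  ∃ f : W ↪ V, ∀ a b : W, G.Adj (f a) (f b) ↔ H.Adj a b

/-- The disjoint union `P_m ∪ k·P_1` of a path on `m` vertices and `k` isolated vertices. -/
def pathUnion (m k : ℕ) : SimpleGraph (Fin m ⊕ Fin k) where
  Adj a b := ∃ i j : Fin m, a = Sum.inl i ∧ b = Sum.inl j ∧ (pathGraph m).Adj i j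
  symm := by constructor; rintro a b ⟨i, j, rfl, rfl, h⟩; exact ⟨j, i, rfl, rfl, h.symm⟩
  loopless := by
    constructor
    rintro a ⟨i, j, rfl, hj, h⟩
    obtain rfl := Sum.inl.inj hj
    exact (pathGraph m).loopless.irrefl i h

/-- The join `G ∨ H` of two graphs. -/
def joinG {α β : Type*} (G : SimpleGraph α) (H : SimpleGraph β) :
    SimpleGraph (α ⊕ β) where
  Adj x y :=
    match x, y with
    | Sum.inl a, Sum.inl b => G.Adj a b
    | Sum.inr a, Sum.inr b => H.Adj a b
    | _, _ => True
  symm := by constructor; rintro (a | a) (b | b) h <;> simp_all <;> exact h.symm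
  loopless := by constructor; rintro (a | a) h <;> simp_all

/-- `a` disjoint copies of the complete graph `K_b`. -/
def cliquesG (a b : ℕ) : SimpleGraph (Fin a × Fin b) where
  Adj p q := p.1 = q.1 ∧ p.2 ≠ q.2
  symm := by constructor; rintro p q ⟨h1, h2⟩; exact ⟨h1.symm, h2.symm⟩
  loopless := by constructor; rintro p ⟨_, h⟩; exact h rfl

/-- The graph `H_n`: `K_n ∨ (K̄_{2n+1} ∪ K_{2n+1})` together with a perfect matching
between the independent part and the clique part. -/
def Hgraph (n : ℕ) :
    SimpleGraph (Fin n ⊕ (Fin (2 * n + 1) ⊕ Fin (2 * n + 1))) where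
  Adj x y := x ≠ y ∧
    match x, y with
    | Sum.inl _, _ => True
    | _, Sum.inl _ => True
    | Sum.inr (Sum.inl _), Sum.inr (Sum.inl _) => False
    | Sum.inr (Sum.inr _), Sum.inr (Sum.inr _) => True
    | Sum.inr (Sum.inl i), Sum.inr (Sum.inr j) => i = j
    | Sum.inr (Sum.inr i), Sum.inr (Sum.inl j) => i = j
  symm := by
    constructor
    rintro (a | a | a) (b | b | b) ⟨hne, h⟩ <;>
      exact ⟨Ne.symm hne, by simp_all⟩
  loopless := by constructor; rintro x ⟨hne, _⟩; exact hne rfl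

/-!
Suppose every odd component of `G - (A ∪ B)` sends exactly one edge to `B`. Moving a vertex
`v ∈ B` out of `B` merges it with the components it touches and changes `δ` by an amount which,
by the minimality of `|B|`, forces `v` to have no neighbour in `B` and to touch only odd
components. Hence the vertices of `B` lie in distinct components of `G - A`; since every barrier
has `|B| > |A|`, 1-toughness leaves only `A = ∅`, `B = {v}`. Then `δ(∅, {v}) ≤ -2` gives
`deg v ≤ c(G - v) ≤ 1`, whereas a 1-tough graph on at least three vertices has minimum degree two.
-/

section EdgeCount

variable {G : SimpleGraph V} {X X₁ X₂ Y Y₁ Y₂ : Set V}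

lemma eB_comm (G : SimpleGraph V) (X Y : Set V) : eB G X Y = eB G Y X := by
  unfold eB
  rw [← Set.ncard_image_of_injective _ Prod.swap_injective]
  congr 1
  ext ⟨a, b⟩
  simp only [Set.mem_image, Set.mem_ofPred_eq, Prod.exists, Prod.swap_prod_mk, Prod.mk.injEq]
  constructor
  · rintro ⟨c, d, ⟨hc, hd, h⟩, rfl, rfl⟩
    exact ⟨hd, hc, h.symm⟩
  · rintro ⟨ha, hb, h⟩
    exact ⟨b, a, ⟨hb, ha, h.symm⟩, rfl, rfl⟩

variable [Finite V]

lemma eB_eq_zero_iff : eB G X Y = 0 ↔ ∀ x ∈ X, ∀ y ∈ Y, ¬ G.Adj x y := by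
  simp only [eB, Set.ncard_eq_zero (Set.toFinite _), Set.eq_empty_iff_forall_notMem]
  exact ⟨fun h x hx y hy hxy => h (x, y) ⟨hx, hy, hxy⟩, fun h p hp => h _ hp.1 _ hp.2.1 hp.2.2⟩

lemma eB_ne_zero_of_adj {x y : V} (hx : x ∈ X) (hy : y ∈ Y) (h : G.Adj x y) : eB G X Y ≠ 0 :=
  fun h0 => eB_eq_zero_iff.mp h0 x hx y hy h

lemma exists_adj_of_eB_ne_zero (h : eB G X Y ≠ 0) : ∃ x ∈ X, ∃ y ∈ Y, G.Adj x y := by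
  simpa [eB_eq_zero_iff] using h

lemma eB_singleton_self (v : V) : eB G {v} {v} = 0 :=
  eB_eq_zero_iff.mpr fun _ hx _ hy h => h.ne (hx.trans hy.symm)

lemma eB_union_left (h : Disjoint X₁ X₂) : eB G (X₁ ∪ X₂) Y = eB G X₁ Y + eB G X₂ Y := by
  unfold eB
  rw [← Set.ncard_union_eq _ (Set.toFinite _) (Set.toFinite _)]
  · congr 1
    ext
    simp only [Set.mem_ofPred_eq, Set.mem_union]
    tauto
  · exact Set.disjoint_left.mpr fun _ h₁ h₂ => h.ne_of_mem h₁.1 h₂.1 rfl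

lemma eB_union_right (h : Disjoint Y₁ Y₂) : eB G X (Y₁ ∪ Y₂) = eB G X Y₁ + eB G X Y₂ := by
  rw [eB_comm, eB_union_left h, eB_comm G Y₁, eB_comm G Y₂]

lemma eB_eq_eB_diff_singleton_add {v : V} (hv : v ∈ Y) :
    eB G X Y = eB G X (Y \ {v}) + eB G X {v} := by
  conv_lhs => rw [← Set.sdiff_union_of_subset (Set.singleton_subset_iff.mpr hv)]
  exact eB_union_right Set.disjoint_sdiff_left

lemma eB_mono_right (h : Y₁ ⊆ Y₂) : eB G X Y₁ ≤ eB G X Y₂ :=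
  Set.ncard_le_ncard (fun _ ⟨hx, hy, hadj⟩ => ⟨hx, h hy, hadj⟩) (Set.toFinite _)

lemma eB_biUnion_left {ι : Type*} (s : Finset ι) (f : ι → Set V)
    (h : (s : Set ι).PairwiseDisjoint f) : eB G (⋃ i ∈ s, f i) Y = ∑ i ∈ s, eB G (f i) Y := by
  classical
  induction s using Finset.induction_on with
  | empty => simp [eB_eq_zero_iff]
  | insert a s ha ih =>
    rw [Finset.coe_insert, Set.pairwiseDisjoint_insert] at h
    rw [Finset.set_biUnion_insert, Finset.sum_insert ha, eB_union_left, ih h.1]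
    exact Set.disjoint_iUnion₂_right.mpr fun i hi => h.2 i hi (ne_of_mem_of_not_mem hi ha).symm

end EdgeCount

section Components

variable {G : SimpleGraph V} {U : Set V}

lemma mem_compSupp {x : V} {C : (G.induce U).ConnectedComponent} :
    x ∈ compSupp G U C ↔ ∃ h : x ∈ U, (G.induce U).connectedComponentMk ⟨x, h⟩ = C := by
  simp [compSupp]

lemma mem_compSupp_mk {x : V} (hx : x ∈ U) :
    x ∈ compSupp G U ((G.induce U).connectedComponentMk ⟨x, hx⟩) :=
  mem_compSupp.mpr ⟨hx, rfl⟩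

lemma compSupp_subset (C : (G.induce U).ConnectedComponent) : compSupp G U C ⊆ U :=
  fun _ hx => (mem_compSupp.mp hx).1

lemma compSupp_injective : Function.Injective (compSupp G U) :=
  (Set.image_injective.mpr Subtype.val_injective).comp ConnectedComponent.supp_injective

lemma pairwiseDisjoint_compSupp :
    (Set.univ : Set (G.induce U).ConnectedComponent).PairwiseDisjoint (compSupp G U) :=
  fun _ _ _ _ hCD => (Set.disjoint_image_iff Subtype.val_injective).mpr
    (pairwise_disjoint_supp_connectedComponent _ hCD)

lemma iUnion_compSupp : ⋃ C, compSupp G U C = U := by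
  simp [compSupp, ← Set.image_iUnion, iUnion_connectedComponentSupp]

lemma connectedComponentMk_supp_subset {W : Type*} {H : SimpleGraph W} {S : Set W}
    (hS : ∀ x ∈ S, ∀ y, H.Adj x y → y ∈ S) {x : W} (hx : x ∈ S) :
    (H.connectedComponentMk x).supp ⊆ S := by
  intro y hy
  obtain ⟨p⟩ := (ConnectedComponent.eq.mp hy).symm
  clear hy
  induction p with
  | nil => exact hx
  | cons h _ ih => exact ih (hS _ hx _ h)

variable [Finite V]

noncomputable instance (G : SimpleGraph V) (U : Set V) :
    Fintype (G.induce U).ConnectedComponent :=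
  Fintype.ofFinite _

lemma eB_eq_sum_compSupp (Y : Set V) :
    eB G U Y = ∑ C : (G.induce U).ConnectedComponent, eB G (compSupp G U C) Y := by
  rw [← eB_biUnion_left _ _ (by simpa using pairwiseDisjoint_compSupp)]
  simp [iUnion_compSupp]

end Components

section InsertVertex

variable {G : SimpleGraph V} {U W : Set V}

lemma compSupp_map_induceHomOfLE (h : U ⊆ W) (K : (G.induce U).ConnectedComponent)
    (hK : ∀ x ∈ compSupp G U K, ∀ y ∈ W, G.Adj x y → y ∈ U) :
    compSupp G W (K.map (G.induceHomOfLE h).toHom) = compSupp G U K := by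
  obtain ⟨⟨x, hx⟩, rfl⟩ : ∃ x, (G.induce U).connectedComponentMk x = K := K.exists_rep
  rw [ConnectedComponent.map_mk]
  apply Set.Subset.antisymm
  · rintro _ ⟨y, hy, rfl⟩
    refine connectedComponentMk_supp_subset (S := {z | z.1 ∈ compSupp G U _}) ?_
      (mem_compSupp_mk hx) hy
    intro a ha b hab
    obtain ⟨haU, hak⟩ := mem_compSupp.mp ha
    have hbU := hK a ha b b.2 hab
    have hab' : (G.induce U).Adj ⟨b, hbU⟩ ⟨a, haU⟩ := hab.symm
    exact mem_compSupp.mpr ⟨hbU, (ConnectedComponent.connectedComponentMk_eq_of_adj hab').trans hak⟩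
  · intro y hy
    obtain ⟨hyU, hyK⟩ := mem_compSupp.mp hy
    have := congrArg (ConnectedComponent.map (G.induceHomOfLE h).toHom) hyK
    rw [ConnectedComponent.map_mk, ConnectedComponent.map_mk] at this
    exact mem_compSupp.mpr ⟨h hyU, this⟩

variable {v : V}

def insertComp (G : SimpleGraph V) (U : Set V) (v : V) :
    (G.induce (insert v U)).ConnectedComponent :=
  (G.induce (insert v U)).connectedComponentMk ⟨v, Set.mem_insert v U⟩

def liftInsert (v : V) (C : (G.induce U).ConnectedComponent) :
    (G.induce (insert v U)).ConnectedComponent :=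
  C.map (G.induceHomOfLE (Set.subset_insert v U)).toHom

lemma liftInsert_mk {x : V} (hx : x ∈ U) :
    liftInsert v ((G.induce U).connectedComponentMk ⟨x, hx⟩) =
      (G.induce (insert v U)).connectedComponentMk ⟨x, Set.mem_insert_of_mem v hx⟩ :=
  ConnectedComponent.map_mk _ _

lemma mem_compSupp_insertComp : v ∈ compSupp G (insert v U) (insertComp G U v) :=
  mem_compSupp_mk _

variable [Finite V]

lemma compSupp_liftInsert {C : (G.induce U).ConnectedComponent}
    (hC : eB G (compSupp G U C) {v} = 0) :
    compSupp G (insert v U) (liftInsert v C) = compSupp G U C :=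
  compSupp_map_induceHomOfLE _ C fun _ hx _ hy hxy =>
    (Set.mem_insert_iff.mp hy).resolve_left fun hyv => eB_ne_zero_of_adj (Y := {v}) hx hyv hxy hC

lemma liftInsert_eq_insertComp {C : (G.induce U).ConnectedComponent}
    (hC : eB G (compSupp G U C) {v} ≠ 0) : liftInsert v C = insertComp G U v := by
  obtain ⟨x, hx, _, rfl, hxv⟩ := exists_adj_of_eB_ne_zero hC
  obtain ⟨hxU, rfl⟩ := mem_compSupp.mp hx
  rw [liftInsert_mk]
  exact ConnectedComponent.connectedComponentMk_eq_of_adj hxv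

lemma liftInsert_ne_insertComp (hv : v ∉ U) {C : (G.induce U).ConnectedComponent}
    (hC : eB G (compSupp G U C) {v} = 0) : liftInsert v C ≠ insertComp G U v := by
  intro h
  have := mem_compSupp_insertComp (G := G) (U := U) (v := v)
  rw [← h, compSupp_liftInsert hC] at this
  exact hv (compSupp_subset C this)

lemma eq_insertComp_or_liftInsert (K : (G.induce (insert v U)).ConnectedComponent) :
    K = insertComp G U v ∨
      ∃ C : (G.induce U).ConnectedComponent,
        eB G (compSupp G U C) {v} = 0 ∧ liftInsert v C = K := by
  obtain ⟨⟨x, hx⟩, rfl⟩ : ∃ x, (G.induce (insert v U)).connectedComponentMk x = K :=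
    K.exists_rep
  obtain rfl | hx := Set.mem_insert_iff.mp hx
  · exact Or.inl rfl
  · rw [← liftInsert_mk hx]
    by_cases hC : eB G (compSupp G U ((G.induce U).connectedComponentMk ⟨x, hx⟩)) {v} = 0
    · exact Or.inr ⟨_, hC, rfl⟩
    · exact Or.inl (liftInsert_eq_insertComp hC)

lemma sum_compSupp_insert {M : Type*} [AddCommMonoid M] (hv : v ∉ U) (F : Set V → M) :
    ∑ K, F (compSupp G (insert v U) K) =
      F (compSupp G (insert v U) (insertComp G U v)) +
        ∑ C with eB G (compSupp G U C) {v} = 0, F (compSupp G U C) := by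
  classical
  rw [← Finset.add_sum_erase _ _ (Finset.mem_univ (insertComp G U v))]
  congr 1
  symm
  refine Finset.sum_nbij (liftInsert v) ?_ ?_ ?_ ?_
  · intro C hC
    exact Finset.mem_erase.mpr ⟨liftInsert_ne_insertComp hv (Finset.mem_filter.mp hC).2,
      Finset.mem_univ _⟩
  · intro C hC D hD hCD
    have hC' := (Finset.mem_filter.mp hC).2
    have hD' := (Finset.mem_filter.mp hD).2
    apply compSupp_injective
    rw [← compSupp_liftInsert hC', ← compSupp_liftInsert hD', hCD]
  · intro K hK
    obtain hKv | ⟨C, hC, rfl⟩ := eq_insertComp_or_liftInsert K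
    · exact absurd hKv (Finset.ne_of_mem_erase hK)
    · exact ⟨C, by simpa using hC, rfl⟩
  · intro C hC
    rw [compSupp_liftInsert (Finset.mem_filter.mp hC).2]

lemma eB_compSupp_insertComp (hv : v ∉ U) (Y : Set V) :
    eB G (compSupp G (insert v U) (insertComp G U v)) Y =
      eB G {v} Y + ∑ C with eB G (compSupp G U C) {v} ≠ 0, eB G (compSupp G U C) Y := by
  have hinsert : eB G (insert v U) Y = eB G {v} Y + eB G U Y := by
    rw [Set.insert_eq, eB_union_left (Set.disjoint_singleton_left.mpr hv)]
  rw [eB_eq_sum_compSupp, sum_compSupp_insert hv (fun X => eB G X Y), eB_eq_sum_compSupp (U := U),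
    ← Finset.sum_filter_add_sum_filter_not Finset.univ
      (fun C => eB G (compSupp G U C) {v} = 0)] at hinsert
  simp only [ne_eq]
  omega

end InsertVertex

lemma natCard_odd_eq_sum_mod_two {ι : Type*} [Fintype ι] (F : ι → ℕ) :
    Nat.card {i // Odd (F i)} = ∑ i, F i % 2 := by
  classical
  rw [Nat.card_eq_fintype_card, Fintype.card_subtype, Finset.card_filter]
  refine Finset.sum_congr rfl fun i _ => ?_
  split_ifs with h
  · exact (Nat.odd_iff.mp h).symm
  · exact (Nat.not_odd_iff.mp h).symm

section Barrier

variable [Finite V] {G : SimpleGraph V} {A B : Set V} {v : V}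

/-- The paper's `⋃_{t ≥ 1} 𝒞_{2t+1} = ∅`. -/
def OddCompsSendOneEdge (G : SimpleGraph V) (A B : Set V) : Prop :=
  ∀ C : (G.induce (A ∪ B)ᶜ).ConnectedComponent,
    Odd (eB G (compSupp G (A ∪ B)ᶜ C) B) → eB G (compSupp G (A ∪ B)ᶜ C) B = 1

lemma deltaAB_eq_sum (G : SimpleGraph V) (A B : Set V) :
    deltaAB G A B = 2 * A.ncard - 2 * B.ncard + eB G B Aᶜ -
      ((∑ C, eB G (compSupp G (A ∪ B)ᶜ C) B % 2 : ℕ) : ℤ) := by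
  rw [deltaAB, natCard_odd_eq_sum_mod_two]

lemma IsBarrier.ncard_lt (h : IsBarrier G A B) : A.ncard < B.ncard := by
  have hodd : ∑ C, eB G (compSupp G (A ∪ B)ᶜ C) B % 2 ≤ eB G B Aᶜ :=
    calc _ ≤ ∑ C, eB G (compSupp G (A ∪ B)ᶜ C) B :=
          Finset.sum_le_sum fun C _ => Nat.mod_le _ _
      _ = eB G B (A ∪ B)ᶜ := by rw [eB_comm, eB_eq_sum_compSupp]
      _ ≤ eB G B Aᶜ := eB_mono_right (Set.compl_subset_compl.mpr Set.subset_union_left)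
  have := h.2
  rw [deltaAB_eq_sum] at this
  omega

lemma IsBarrier.eB_add_le_numComp (h : IsBarrier G A B) :
    eB G B Aᶜ + 2 * A.ncard + 2 ≤ 2 * B.ncard + numComp G (A ∪ B) := by
  have hδ := h.2
  have hodd := Finite.card_subtype_le fun C : (G.induce (A ∪ B)ᶜ).ConnectedComponent =>
    Odd (eB G (compSupp G (A ∪ B)ᶜ C) B)
  rw [deltaAB] at hδ
  rw [numComp]
  omega

/-- In `G - (A ∪ (B - v))` the components of `G - (A ∪ B)` touching `v` merge with `v` into
`insertComp`; the others survive unchanged. -/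
lemma deltaAB_add_two_eq (hAB : Disjoint A B) (hv : v ∈ B) :
    deltaAB G A B + 2 = deltaAB G A (B \ {v}) +
      ((eB G {v} (B \ {v}) +
          eB G (compSupp G _ (insertComp G (A ∪ B)ᶜ v)) (B \ {v}) % 2 +
          ∑ C with eB G (compSupp G (A ∪ B)ᶜ C) {v} ≠ 0,
            (eB G (compSupp G (A ∪ B)ᶜ C) {v} - eB G (compSupp G (A ∪ B)ᶜ C) B % 2) : ℕ) : ℤ) := by
  classical
  set U := (A ∪ B)ᶜ with hU
  have hvU : v ∉ U := fun h => h (Or.inr hv)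
  have hset : (A ∪ B \ {v})ᶜ = insert v U := by
    ext x
    by_cases hx : x = v
    · subst hx
      simp [U, hv, hAB.notMem_of_mem_right hv]
    · simp [U, hx]
  have hAc : Aᶜ = B \ {v} ∪ insert v U := by
    ext x
    by_cases hx : x = v
    · subst hx
      simp [U, hAB.notMem_of_mem_right hv]
    · by_cases hxB : x ∈ B <;> simp [U, hx, hxB, hAB.notMem_of_mem_right]
  have hdeg : eB G {v} Aᶜ = eB G {v} (B \ {v}) + ∑ C, eB G (compSupp G U C) {v} := by
    rw [hAc, eB_union_right (Set.disjoint_left.mpr fun x hx hx' => ?_), Set.insert_eq,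
      eB_union_right (Set.disjoint_singleton_left.mpr hvU), eB_comm G {v} U,
      eB_eq_sum_compSupp (U := U), eB_singleton_self, zero_add]
    obtain rfl | hxU := hx'
    · exact hx.2 rfl
    · exact hxU (Or.inr hx.1)
  have hBA : eB G B Aᶜ = eB G (B \ {v}) Aᶜ + eB G {v} Aᶜ := by
    rw [eB_comm, eB_eq_eB_diff_singleton_add hv, eB_comm, eB_comm G Aᶜ]
  have hcard := Set.ncard_sdiff_singleton_add_one hv
  have hodd : ∑ C, eB G (compSupp G U C) B % 2 =
      ∑ C with eB G (compSupp G U C) {v} = 0, eB G (compSupp G U C) (B \ {v}) % 2 +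
        ∑ C with eB G (compSupp G U C) {v} ≠ 0, eB G (compSupp G U C) B % 2 := by
    rw [← Finset.sum_filter_add_sum_filter_not Finset.univ
      (fun C => eB G (compSupp G U C) {v} = 0)]
    congr 1
    refine Finset.sum_congr rfl fun C hC => ?_
    rw [eB_eq_eB_diff_singleton_add hv, (Finset.mem_filter.mp hC).2, add_zero]
  have htouch : ∑ C, eB G (compSupp G U C) {v} =
      ∑ C with eB G (compSupp G U C) {v} ≠ 0, eB G (compSupp G U C) {v} := by
    rw [Finset.sum_filter_ne_zero]
  have hsub : ∑ C with eB G (compSupp G U C) {v} ≠ 0,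
        (eB G (compSupp G U C) {v} - eB G (compSupp G U C) B % 2) +
      ∑ C with eB G (compSupp G U C) {v} ≠ 0, eB G (compSupp G U C) B % 2 =
      ∑ C with eB G (compSupp G U C) {v} ≠ 0, eB G (compSupp G U C) {v} := by
    rw [← Finset.sum_add_distrib]
    refine Finset.sum_congr rfl fun C hC => Nat.sub_add_cancel ?_
    have := (Finset.mem_filter.mp hC).2
    omega
  rw [deltaAB_eq_sum, deltaAB_eq_sum, ← hU, hset,
    sum_compSupp_insert hvU (fun X => eB G X (B \ {v}) % 2)]
  omega

end Barrier

section BiasedBarrier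

variable [Finite V] {G : SimpleGraph V} {A B : Set V} {v : V}

/-- Moving `v` from `B` into `G - (A ∪ B)` would otherwise give a barrier with the same `A` and a
smaller `B`. -/
lemma IsBiasedBarrier.eB_singleton_diff_eq_zero_and_odd (hAB : IsBiasedBarrier G A B)
    (hone : OddCompsSendOneEdge G A B) (hv : v ∈ B) :
    eB G {v} (B \ {v}) = 0 ∧
      ∀ C : (G.induce (A ∪ B)ᶜ).ConnectedComponent,
        eB G (compSupp G (A ∪ B)ᶜ C) {v} ≠ 0 → Odd (eB G (compSupp G (A ∪ B)ᶜ C) B) := by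
  classical
  obtain ⟨⟨hdisj, hbarrier⟩, hmin⟩ := hAB
  set U := (A ∪ B)ᶜ
  have hvU : v ∉ U := fun h => h (Or.inr hv)
  set T := Finset.univ.filter fun C : (G.induce U).ConnectedComponent =>
    eB G (compSupp G U C) {v} ≠ 0
  set excess := fun C => eB G (compSupp G U C) {v} - eB G (compSupp G U C) B % 2
  have hcomp : ∀ C ∈ T, excess C % 2 = eB G (compSupp G U C) (B \ {v}) % 2 ∧
      (excess C = 0 ↔ Odd (eB G (compSupp G U C) B)) := by
    intro C hC
    have htouch := (Finset.mem_filter.mp hC).2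
    have hsplit := eB_eq_eB_diff_singleton_add (G := G) (X := compSupp G U C) hv
    have hC1 : Odd (eB G (compSupp G U C) B) → eB G (compSupp G U C) B = 1 := hone C
    simp only [excess, Nat.odd_iff] at hC1 ⊢
    omega
  by_contra hbad
  have hpos : 1 ≤ eB G {v} (B \ {v}) + ∑ C ∈ T, excess C := by
    by_contra! h0
    refine hbad ⟨by omega, fun C hC => ?_⟩
    have hCT : C ∈ T := Finset.mem_filter.mpr ⟨Finset.mem_univ C, hC⟩
    have := Finset.single_le_sum (f := excess) (fun _ _ => Nat.zero_le _) hCT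
    exact (hcomp C hCT).2.mp (by omega)
  have hpar : (∑ C ∈ T, eB G (compSupp G U C) (B \ {v})) % 2 = (∑ C ∈ T, excess C) % 2 := by
    rw [Finset.sum_nat_mod, Finset.sum_congr rfl fun C hC => (hcomp C hC).1.symm,
      ← Finset.sum_nat_mod]
  have hle : deltaAB G A (B \ {v}) ≤ deltaAB G A B := by
    have key : deltaAB G A B + 2 = deltaAB G A (B \ {v}) +
        ((eB G {v} (B \ {v}) +
          (eB G {v} (B \ {v}) + ∑ C ∈ T, eB G (compSupp G U C) (B \ {v})) % 2 +
          ∑ C ∈ T, excess C : ℕ) : ℤ) := by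
      rw [← eB_compSupp_insertComp hvU]
      exact deltaAB_add_two_eq hdisj hv
    omega
  have hB := (hmin A (B \ {v}) ⟨hdisj.mono_right Set.sdiff_subset, hle.trans hbarrier⟩).2 rfl
  have := Set.ncard_sdiff_singleton_add_one hv
  omega

lemma IsBiasedBarrier.eB_compSupp_insertComp_eq_zero (hAB : IsBiasedBarrier G A B)
    (hone : OddCompsSendOneEdge G A B) (hv : v ∈ B) :
    eB G (compSupp G _ (insertComp G (A ∪ B)ᶜ v)) (B \ {v}) = 0 := by
  obtain ⟨hB, hodd⟩ := hAB.eB_singleton_diff_eq_zero_and_odd hone hv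
  rw [eB_compSupp_insertComp (fun h : v ∈ (A ∪ B)ᶜ => h (Or.inr hv)), hB, zero_add]
  refine Finset.sum_eq_zero fun C hC => ?_
  have htouch := (Finset.mem_filter.mp hC).2
  have hC1 := hone C (hodd C htouch)
  rw [eB_eq_eB_diff_singleton_add hv] at hC1
  omega

/-- Distinct vertices of `B` lie in distinct components of `G - A`. -/
lemma IsBiasedBarrier.ncard_le_numComp (hAB : IsBiasedBarrier G A B)
    (hone : OddCompsSendOneEdge G A B) : B.ncard ≤ numComp G A := by
  have hBA : ∀ b ∈ B, b ∈ Aᶜ := fun b hb ha => hAB.1.1.notMem_of_mem_right hb ha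
  have hcomp : ∀ w (hw : w ∈ B),
      compSupp G Aᶜ ((G.induce Aᶜ).connectedComponentMk ⟨w, hBA w hw⟩) ⊆ insert w (A ∪ B)ᶜ := by
    intro w hw
    have hsub : insert w (A ∪ B)ᶜ ⊆ Aᶜ := Set.insert_subset (hBA w hw)
      (Set.compl_subset_compl.mpr Set.subset_union_left)
    have hzero := hAB.eB_compSupp_insertComp_eq_zero hone hw
    have := compSupp_map_induceHomOfLE hsub (insertComp G (A ∪ B)ᶜ w) fun x hx y hy hxy => by
      by_contra hy'
      refine eB_ne_zero_of_adj (Y := B \ {w}) hx ⟨?_, fun hyw => hy' (Or.inl hyw)⟩ hxy hzero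
      by_contra hyB
      exact hy' (Or.inr fun hAB' => hAB'.elim hy hyB)
    rw [insertComp, ConnectedComponent.map_mk] at this
    exact this ▸ compSupp_subset _
  calc B.ncard = Nat.card B := (Nat.card_coe_set_eq B).symm
    _ ≤ numComp G A := Nat.card_le_card_of_injective
        (fun b : B => (G.induce Aᶜ).connectedComponentMk ⟨b, hBA b b.2⟩) fun u w huw => by
      obtain huw | hu := hcomp w w.2 (mem_compSupp.mpr ⟨hBA u u.2, huw⟩)
      · exact Subtype.ext huw
      · exact absurd (Or.inr u.2) hu

end BiasedBarrier

section Toughness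

variable {G : SimpleGraph V}

lemma Tough.numComp_le_max (h : Tough 1 G) (S : Set V) : numComp G S ≤ max 1 S.ncard := by
  by_cases hS : 2 ≤ numComp G S
  · have := h S hS
    rw [one_mul, Nat.cast_le] at this
    omega
  · omega

variable [Finite V]

lemma two_le_numComp_of_forall_adj_mem {S : Set V} {v w : V} (hv : v ∉ S) (hw : w ∉ S)
    (hvw : v ≠ w) (hN : ∀ y, G.Adj v y → y ∈ S) : 2 ≤ numComp G S := by
  have hne : (G.induce Sᶜ).connectedComponentMk ⟨v, hv⟩ ≠
      (G.induce Sᶜ).connectedComponentMk ⟨w, hw⟩ := by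
    intro h
    have := connectedComponentMk_supp_subset (H := G.induce Sᶜ) (S := {⟨v, hv⟩})
      (fun x hx y hxy => by
        obtain rfl := Set.mem_singleton_iff.mp hx
        exact absurd (hN y hxy) y.2) rfl
      (show ⟨w, hw⟩ ∈ ((G.induce Sᶜ).connectedComponentMk ⟨v, hv⟩).supp from h.symm)
    exact hvw (congrArg Subtype.val this).symm
  exact Finite.one_lt_card_iff_nontrivial.mpr ⟨_, _, hne⟩

lemma Tough.exists_adj_ne (h : Tough 1 G) (hn : 3 ≤ Nat.card V) (v u : V) :
    ∃ y, G.Adj v y ∧ y ≠ u := by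
  by_contra! hN
  obtain ⟨w, hw, hwv⟩ := Set.exists_ne_of_one_lt_ncard (s := Set.univ \ {u})
    (by rw [Set.ncard_sdiff_singleton_of_mem (Set.mem_univ u), Set.ncard_univ]; omega) v
  have h2 := two_le_numComp_of_forall_adj_mem (S := {u} \ {v}) (by simp) (by simp_all)
    hwv.symm fun y hy => ⟨hN y hy, hy.ne'⟩
  have h1 : ({u} \ {v} : Set V).ncard ≤ 1 :=
    (Set.ncard_le_ncard Set.sdiff_subset).trans (Set.ncard_singleton u).le
  have := h.numComp_le_max ({u} \ {v})
  omega

lemma Tough.two_le_eB_singleton_univ (h : Tough 1 G) (hn : 3 ≤ Nat.card V) (v : V) :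
    2 ≤ eB G {v} Set.univ := by
  obtain ⟨y₁, h₁, -⟩ := h.exists_adj_ne hn v v
  obtain ⟨y₂, h₂, hne⟩ := h.exists_adj_ne hn v y₁
  calc 2 = ({(v, y₁), (v, y₂)} : Set (V × V)).ncard := (Set.ncard_pair (by simp [hne.symm])).symm
    _ ≤ eB G {v} Set.univ := Set.ncard_le_ncard
        (by rintro _ (rfl | rfl) <;> exact ⟨rfl, trivial, ‹_›⟩) (Set.toFinite _)

end Toughness

theorem stmt8_general {V : Type*} [Fintype V] (G : SimpleGraph V) (A B : Set V)
    (htough : Tough 1 G) (hn : 3 ≤ Nat.card V)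
    (hAB : IsBiasedBarrier G A B) :
    ∃ C : (G.induce (A ∪ B)ᶜ).ConnectedComponent,
      Odd (eB G (compSupp G (A ∪ B)ᶜ C) B) ∧ 3 ≤ eB G (compSupp G (A ∪ B)ᶜ C) B := by
  by_contra! hsmall
  have hone : OddCompsSendOneEdge G A B := fun C hC => by
    have := hsmall C hC
    obtain ⟨k, hk⟩ := hC
    omega
  have hlt := hAB.1.ncard_lt
  have hle := hAB.ncard_le_numComp hone
  have hA := htough.numComp_le_max A
  obtain rfl : A = ∅ := (Set.ncard_eq_zero (Set.toFinite A)).mp (by omega)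
  obtain ⟨v, rfl⟩ : ∃ v, B = {v} := Set.ncard_eq_one.mp (by omega)
  have hbarrier := hAB.1.eB_add_le_numComp
  have hv := htough.numComp_le_max (∅ ∪ {v})
  have hdeg := htough.two_le_eB_singleton_univ hn v
  simp only [Set.compl_empty, Set.ncard_singleton, Set.ncard_empty, Set.empty_union] at hbarrier hv
  omega

theorem stmt8 {V : Type*} [Fintype V] (G : SimpleGraph V) (A B : Set V)
    (htough : Tough 1 G) (hn : 3 ≤ Nat.card V)
    (hG : ¬ HasTwoFactor G) (hAB : IsBiasedBarrier G A B) :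
    ∃ C : (G.induce (A ∪ B)ᶜ).ConnectedComponent,
      Odd (eB G (compSupp G (A ∪ B)ᶜ C) B) ∧ 3 ≤ eB G (compSupp G (A ∪ B)ᶜ C) B :=
  stmt8_general G A B htough hn hAB
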